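/- There exist universal constants c > 0 and ν₀ > 0 such that the following holds. Let x be a random vector in ℝ^d such that for every unit vector u ∈ ℝ^d the random variable ⟨x, u⟩ is sub-Gaussian with variance proxy 1 (i.e., E[exp(λ⟨x, u⟩)] ≤ exp(λ²/2) for all λ ∈ ℝ), and let ξ be a real random variable independent of x that is sub-Gaussian with variance proxy σ² and mean zero. Fix β, β* ∈ ℝ^d with Δ = β − β*, let g = x·(xᵀβ − xᵀβ* − ξ) = x xᵀ Δ − ξ x, and fix v ∈ ℝ^d with ‖v‖₂ ≤ D. Then ⟨g, v⟩ − E[⟨g, v⟩] is sub-exponential with parameter ν·D where ν = ν₀·√(‖Δ‖₂² + σ²); that is, for all λ ∈ ℝ with |λ| ≤ 1/(ν·D), E[exp(λ·(⟨g, v⟩ − E⟨g, v⟩))] ≤ exp(c·λ²·ν²·D²). -/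

import Mathlib

open MeasureTheory ProbabilityTheory
open scoped RealInnerProductSpace ENNReal


lemma my_exp_taylor (u : ℝ) : Real.exp u ≤ 1 + u + u ^ 2 * Real.exp |u| := by
  rcases le_or_gt |u| 1 with h | h
  · have h1 := Real.abs_exp_sub_one_sub_id_le h
    have h2 : (1 : ℝ) ≤ Real.exp |u| := Real.one_le_exp (abs_nonneg u)
    have h3 : Real.exp u - 1 - u ≤ u ^ 2 := (le_abs_self _).trans h1
    nlinarith [sq_nonneg u]
  · rcases le_or_gt 0 u with hu | hu
    · have hu1 : 1 < u := by rwa [abs_of_nonneg hu] at h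
      rw [abs_of_nonneg hu]
      have h4 : (0:ℝ) ≤ (u ^ 2 - 1) * Real.exp u :=
        mul_nonneg (by nlinarith) (Real.exp_nonneg u)
      nlinarith
    · have hu1 : 1 < -u := by rwa [abs_of_neg hu] at h
      have h2 : (1 : ℝ) ≤ Real.exp |u| := Real.one_le_exp (abs_nonneg u)
      have h3 : Real.exp u ≤ 1 := Real.exp_le_one_iff.mpr hu.le
      nlinarith [sq_nonneg u]

lemma my_sq_le_exp {x : ℝ} (hx : 0 ≤ x) : x ^ 2 ≤ 2 * Real.exp x := by
  have h1 : (1 + x / 3) ^ 3 ≤ Real.exp x := by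
    have h2 : 1 + x / 3 ≤ Real.exp (x / 3) := by linarith [Real.add_one_le_exp (x / 3)]
    calc (1 + x / 3) ^ 3 ≤ Real.exp (x / 3) ^ 3 := by
          apply pow_le_pow_left₀ (by linarith) h2
      _ = Real.exp x := by rw [← Real.exp_nat_mul]; norm_num; ring_nf
  nlinarith [mul_nonneg hx (sq_nonneg (x - 3)), sq_nonneg x]


lemma my_chernoff {Ω : Type} [MeasureSpace Ω] [IsProbabilityMeasure (ℙ : Measure Ω)]
    (Y : Ω → ℝ) (τ : ℝ) (hτ : 0 < τ)
    (h : ∀ t : ℝ, Integrable (fun ω => Real.exp (t * Y ω)) ℙ ∧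
      ∫ ω, Real.exp (t * Y ω) ∂ℙ ≤ Real.exp (t ^ 2 * τ ^ 2 / 2))
    (r : ℝ) (hr : 0 ≤ r) :
    (ℙ {ω | r ≤ |Y ω|}) ≤ ENNReal.ofReal (2 * Real.exp (-r ^ 2 / (2 * τ ^ 2))) := by
  set t : ℝ := r / τ ^ 2 with ht_def
  have ht : 0 ≤ t := div_nonneg hr (by positivity)
  have hexp : Real.exp (-t * r) * Real.exp (t ^ 2 * τ ^ 2 / 2)
      = Real.exp (-r ^ 2 / (2 * τ ^ 2)) := by
    rw [← Real.exp_add]; congr 1; rw [ht_def]; have hτ' : (τ:ℝ) ≠ 0 := hτ.ne'; field_simp; ring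
  have one_side : ∀ X : Ω → ℝ, (∀ s : ℝ, Integrable (fun ω => Real.exp (s * X ω)) ℙ ∧
      ∫ ω, Real.exp (s * X ω) ∂ℙ ≤ Real.exp (s ^ 2 * τ ^ 2 / 2)) →
      (ℙ {ω | r ≤ X ω}) ≤ ENNReal.ofReal (Real.exp (-r ^ 2 / (2 * τ ^ 2))) := by
    intro X hX
    have hb := measure_ge_le_exp_mul_mgf (X := X) (μ := ℙ) r ht (hX t).1
    have hmgf : mgf X ℙ t ≤ Real.exp (t ^ 2 * τ ^ 2 / 2) := (hX t).2
    have hbb : (ℙ {ω | r ≤ X ω}).toReal ≤ Real.exp (-r ^ 2 / (2 * τ ^ 2)) := by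
      refine hb.trans ?_
      rw [← hexp]
      gcongr
    rw [← ENNReal.ofReal_toReal (measure_ne_top ℙ _)]
    exact ENNReal.ofReal_le_ofReal hbb
  have hsub : {ω | r ≤ |Y ω|} ⊆ {ω | r ≤ Y ω} ∪ {ω | r ≤ -Y ω} := by
    intro ω hω
    rcases abs_cases (Y ω) with ⟨he, _⟩ | ⟨he, _⟩
    · left; exact Set.mem_setOf.mpr (he ▸ hω)
    · right; exact Set.mem_setOf.mpr (he ▸ hω)
  calc ℙ {ω | r ≤ |Y ω|} ≤ ℙ {ω | r ≤ Y ω} + ℙ {ω | r ≤ -Y ω} :=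
        (measure_mono hsub).trans (measure_union_le _ _)
    _ ≤ ENNReal.ofReal (Real.exp (-r ^ 2 / (2 * τ ^ 2)))
        + ENNReal.ofReal (Real.exp (-r ^ 2 / (2 * τ ^ 2))) := by
        refine add_le_add (one_side Y h) (one_side (fun ω => -Y ω) fun s => ?_)
        have := h (-s); simpa [neg_mul, mul_neg, neg_neg] using this
    _ = ENNReal.ofReal (2 * Real.exp (-r ^ 2 / (2 * τ ^ 2))) := by
        rw [← ENNReal.ofReal_add (Real.exp_pos _).le (Real.exp_pos _).le]; ring_nf

lemma my_exp_sq {Ω : Type} [MeasureSpace Ω] [IsProbabilityMeasure (ℙ : Measure Ω)]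
    (Y : Ω → ℝ) (hY : Measurable Y) (τ : ℝ) (hτ : 0 < τ)
    (h : ∀ t : ℝ, Integrable (fun ω => Real.exp (t * Y ω)) ℙ ∧
      ∫ ω, Real.exp (t * Y ω) ∂ℙ ≤ Real.exp (t ^ 2 * τ ^ 2 / 2))
    (c : ℝ) (hc : 0 ≤ c) (hcτ : c * τ ^ 2 ≤ 1 / 8) :
    ∫⁻ ω, ENNReal.ofReal (Real.exp (c * Y ω ^ 2)) ∂ℙ ≤ ENNReal.ofReal 14 := by
  set S : ℕ → Set Ω := fun n => {ω | (n : ℝ) * τ ≤ |Y ω| ∧ |Y ω| < ((n : ℝ) + 1) * τ} with hS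
  have hSm : ∀ n, MeasurableSet (S n) := fun n =>
    (measurableSet_le measurable_const hY.abs).inter (measurableSet_lt hY.abs measurable_const)
  have hpt : ∀ ω, ENNReal.ofReal (Real.exp (c * Y ω ^ 2)) ≤
      ∑' n : ℕ, (S n).indicator
        (fun _ => ENNReal.ofReal (Real.exp (c * (((n : ℝ) + 1) * τ) ^ 2))) ω := by
    intro ω
    set n : ℕ := ⌊|Y ω| / τ⌋₊ with hn
    have h1 : (n : ℝ) * τ ≤ |Y ω| := by
      rw [← le_div_iff₀ hτ]
      exact Nat.floor_le (by positivity)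
    have h2 : |Y ω| < ((n : ℝ) + 1) * τ := by
      rw [← div_lt_iff₀ hτ]
      show |Y ω| / τ < (⌊|Y ω| / τ⌋₊ : ℝ) + 1
      exact Nat.lt_floor_add_one _
    have hmem : ω ∈ S n := ⟨h1, h2⟩
    refine le_trans ?_ (ENNReal.le_tsum n)
    rw [Set.indicator_of_mem hmem]
    apply ENNReal.ofReal_le_ofReal
    apply Real.exp_le_exp.mpr
    have hsq : Y ω ^ 2 ≤ (((n : ℝ) + 1) * τ) ^ 2 := by
      rw [← sq_abs (Y ω)]
      apply sq_le_sq' _ h2.le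
      have : (0:ℝ) ≤ ((n : ℝ) + 1) * τ := by positivity
      linarith [abs_nonneg (Y ω)]
    exact mul_le_mul_of_nonneg_left hsq hc
  have key : ∫⁻ ω, ENNReal.ofReal (Real.exp (c * Y ω ^ 2)) ∂ℙ ≤
      ∑' n : ℕ, ENNReal.ofReal
        (Real.exp (((n : ℝ) + 1) ^ 2 / 8) * (2 * Real.exp (-(n : ℝ) ^ 2 / 2))) := by
    calc ∫⁻ ω, ENNReal.ofReal (Real.exp (c * Y ω ^ 2)) ∂ℙ
        ≤ ∫⁻ ω, ∑' n : ℕ, (S n).indicator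
            (fun _ => ENNReal.ofReal (Real.exp (c * (((n : ℝ) + 1) * τ) ^ 2))) ω ∂ℙ :=
          lintegral_mono hpt
      _ = ∑' n : ℕ, ∫⁻ ω, (S n).indicator
            (fun _ => ENNReal.ofReal (Real.exp (c * (((n : ℝ) + 1) * τ) ^ 2))) ω ∂ℙ :=
          lintegral_tsum fun n => (measurable_const.indicator (hSm n)).aemeasurable
      _ ≤ ∑' n : ℕ, ENNReal.ofReal
          (Real.exp (((n : ℝ) + 1) ^ 2 / 8) * (2 * Real.exp (-(n : ℝ) ^ 2 / 2))) := by
          refine ENNReal.tsum_le_tsum fun n => ?_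
          rw [lintegral_indicator (hSm n), setLIntegral_const]
          rw [ENNReal.ofReal_mul (Real.exp_pos _).le]
          refine mul_le_mul ?_ ?_ zero_le zero_le
          · apply ENNReal.ofReal_le_ofReal
            apply Real.exp_le_exp.mpr
            calc c * (((n : ℝ) + 1) * τ) ^ 2 = (c * τ ^ 2) * ((n : ℝ) + 1) ^ 2 := by ring
              _ ≤ (1 / 8) * ((n : ℝ) + 1) ^ 2 := by
                  apply mul_le_mul_of_nonneg_right hcτ (by positivity)
              _ = ((n : ℝ) + 1) ^ 2 / 8 := by ring
          · have hsub : S n ⊆ {ω | (n : ℝ) * τ ≤ |Y ω|} := fun ω hω => hω.1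
            refine (measure_mono hsub).trans ?_
            have := my_chernoff Y τ hτ h ((n : ℝ) * τ) (by positivity)
            refine this.trans (ENNReal.ofReal_le_ofReal ?_)
            have hτ' : (τ : ℝ) ≠ 0 := hτ.ne'
            have : -((n : ℝ) * τ) ^ 2 / (2 * τ ^ 2) = -(n : ℝ) ^ 2 / 2 := by
              field_simp
            rw [this]
  refine key.trans ?_
  have hterm : ∀ n : ℕ, Real.exp (((n : ℝ) + 1) ^ 2 / 8) * (2 * Real.exp (-(n : ℝ) ^ 2 / 2))
      ≤ 2 * Real.exp (1 / 4) * Real.exp (-(1 : ℝ) / 4) ^ n := by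
    intro n
    have hpow : Real.exp (-(1 : ℝ) / 4) ^ n = Real.exp (-(n : ℝ) / 4) := by
      rw [← Real.exp_nat_mul]; congr 1; ring
    have hexp2 : ((n : ℝ) + 1) ^ 2 / 8 + (-(n : ℝ) ^ 2 / 2) ≤ 1 / 4 + (-(n : ℝ) / 4) := by
      rcases Nat.eq_zero_or_pos n with h0 | h0
      · subst h0; norm_num
      · have h1n : (1 : ℝ) ≤ (n : ℝ) := by exact_mod_cast h0
        nlinarith
    calc Real.exp (((n : ℝ) + 1) ^ 2 / 8) * (2 * Real.exp (-(n : ℝ) ^ 2 / 2))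
        = 2 * Real.exp (((n : ℝ) + 1) ^ 2 / 8 + (-(n : ℝ) ^ 2 / 2)) := by
          rw [Real.exp_add]; ring
      _ ≤ 2 * Real.exp (1 / 4 + (-(n : ℝ) / 4)) := by
          have := Real.exp_le_exp.mpr hexp2; linarith
      _ = 2 * Real.exp (1 / 4) * Real.exp (-(1 : ℝ) / 4) ^ n := by
          rw [Real.exp_add, hpow]; ring
  set r : ℝ := Real.exp (-(1 : ℝ) / 4) with hr_def
  have hr0 : 0 ≤ r := Real.exp_nonneg _
  have hr1 : r < 1 := by
    rw [hr_def, ← Real.exp_zero]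
    exact Real.exp_lt_exp.mpr (by norm_num)
  have hsummable : Summable (fun n : ℕ => 2 * Real.exp (1 / 4) * r ^ n) :=
    (summable_geometric_of_lt_one hr0 hr1).mul_left _
  calc ∑' n : ℕ, ENNReal.ofReal
        (Real.exp (((n : ℝ) + 1) ^ 2 / 8) * (2 * Real.exp (-(n : ℝ) ^ 2 / 2)))
      ≤ ∑' n : ℕ, ENNReal.ofReal (2 * Real.exp (1 / 4) * r ^ n) :=
        ENNReal.tsum_le_tsum fun n => ENNReal.ofReal_le_ofReal (hterm n)
    _ = ENNReal.ofReal (∑' n : ℕ, 2 * Real.exp (1 / 4) * r ^ n) :=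
        (ENNReal.ofReal_tsum_of_nonneg (fun n => by positivity) hsummable).symm
    _ ≤ ENNReal.ofReal 14 := by
        apply ENNReal.ofReal_le_ofReal
        rw [tsum_mul_left, tsum_geometric_of_lt_one hr0 hr1]
        have he14 : Real.exp (1 / 4) < 1.3 := by
          have h4 : Real.exp ((1:ℝ) / 4) ^ 4 = Real.exp 1 := by
            rw [← Real.exp_nat_mul]; norm_num
          have : Real.exp ((1:ℝ) / 4) ^ 4 < (1.3 : ℝ) ^ 4 := by
            rw [h4]; calc Real.exp 1 < 2.7182818286 := Real.exp_one_lt_d9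
              _ < (1.3 : ℝ) ^ 4 := by norm_num
          exact lt_of_pow_lt_pow_left₀ 4 (by norm_num) this
        have hrle : r ≤ 0.8 := by
          have h5 : (1.25 : ℝ) ≤ Real.exp (1 / 4) := by
            linarith [Real.add_one_le_exp ((1:ℝ)/4)]
          rw [hr_def]
          have : Real.exp (-(1:ℝ)/4) = (Real.exp ((1:ℝ)/4))⁻¹ := by
            rw [← Real.exp_neg]; norm_num
          rw [this]
          rw [inv_le_comm₀ (by positivity) (by norm_num)]
          linarith
        have hinv : (1 - r)⁻¹ ≤ 5 := by
          have h02 : (0.2 : ℝ) ≤ 1 - r := by linarith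
          calc (1 - r)⁻¹ ≤ (0.2 : ℝ)⁻¹ := by
                apply inv_anti₀ (by norm_num) h02
            _ = 5 := by norm_num
        have hpos : (0:ℝ) < (1 - r)⁻¹ := inv_pos.mpr (by linarith)
        nlinarith [Real.exp_pos ((1:ℝ)/4)]

lemma my_young_aux (s D A B : ℝ) (hs : 0 < s) (hD : 0 < D)
    (hkey : 2 * s * D * (A * B) ≤ s ^ 2 * A ^ 2 + D ^ 2 * B ^ 2) :
    1 / (8 * s * D) * (A * B) ≤ 1 / (8 * D ^ 2) * A ^ 2 / 2 + 1 / (8 * s ^ 2) * B ^ 2 / 2 := by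
  have hiden : 1 / (8 * D ^ 2) * A ^ 2 / 2 + 1 / (8 * s ^ 2) * B ^ 2 / 2
      - 1 / (8 * s * D) * (A * B)
      = (s ^ 2 * A ^ 2 + D ^ 2 * B ^ 2 - 2 * s * D * (A * B)) / (16 * s ^ 2 * D ^ 2) := by
    field_simp
    ring
  have hnn : (0:ℝ) ≤ (s ^ 2 * A ^ 2 + D ^ 2 * B ^ 2 - 2 * s * D * (A * B)) / (16 * s ^ 2 * D ^ 2) :=
    div_nonneg (by linarith) (by positivity)
  linarith

set_option maxHeartbeats 1000000 in
/-- **Sub-exponential property of the projected linear-regression gradient.**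
There are universal constants `c > 0` and `ν₀ > 0` such that: if every unit projection
`⟪x, u⟫` is sub-Gaussian with variance proxy `1`, `ξ` is independent of `x`, mean zero and
sub-Gaussian with variance proxy `σ²`, `g = x xᵀ Δ - ξ x` with `Δ = β - β*`, and
`‖v‖ ≤ D`, then `⟪g, v⟫ - E⟪g, v⟫` is sub-exponential with parameter `ν D` where
`ν = ν₀ √(‖Δ‖² + σ²)`: for all `|λ| ≤ 1 / (ν D)`,
`E[exp (λ (⟪g, v⟫ - E⟪g, v⟫))] ≤ exp (c λ² ν² D²)`. -/
theorem projected_gradient_subexponential :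
    ∃ c : ℝ, 0 < c ∧ ∃ ν₀ : ℝ, 0 < ν₀ ∧
      ∀ (Ω : Type) [MeasureSpace Ω] [IsProbabilityMeasure (ℙ : Measure Ω)]
        (d : ℕ) (x : Ω → EuclideanSpace ℝ (Fin d)) (ξ : Ω → ℝ),
        Measurable x → Measurable ξ → IndepFun x ξ ℙ →
        (∀ u : EuclideanSpace ℝ (Fin d), ‖u‖ = 1 → ∀ t : ℝ,
          Integrable (fun ω => Real.exp (t * ⟪x ω, u⟫)) ℙ ∧
            ∫ ω, Real.exp (t * ⟪x ω, u⟫) ∂ℙ ≤ Real.exp (t ^ 2 / 2)) →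
        ∀ σ : ℝ, 0 ≤ σ →
        Integrable ξ ℙ → (∫ ω, ξ ω ∂ℙ) = 0 →
        (∀ t : ℝ, Integrable (fun ω => Real.exp (t * ξ ω)) ℙ ∧
            ∫ ω, Real.exp (t * ξ ω) ∂ℙ ≤ Real.exp (t ^ 2 * σ ^ 2 / 2)) →
        ∀ (β βstar : EuclideanSpace ℝ (Fin d)) (g : Ω → EuclideanSpace ℝ (Fin d)),
          (∀ ω i, g ω i = x ω i * (⟪x ω, β⟫ - ⟪x ω, βstar⟫ - ξ ω)) →
        ∀ (v : EuclideanSpace ℝ (Fin d)) (D : ℝ), ‖v‖ ≤ D →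
        ∀ lam : ℝ,
          |lam| ≤ 1 / (ν₀ * Real.sqrt (‖β - βstar‖ ^ 2 + σ ^ 2) * D) →
          ∫ ω, Real.exp (lam * (⟪g ω, v⟫ - ∫ ω', ⟪g ω', v⟫ ∂ℙ)) ∂ℙ ≤
            Real.exp (c * lam ^ 2 *
              (ν₀ ^ 2 * (‖β - βstar‖ ^ 2 + σ ^ 2)) * D ^ 2) := by
  refine ⟨112 * Real.exp 14, by positivity, 8, by norm_num, ?_⟩
  intro Ω _ _ d x ξ hxm hξm hIndep hx σ hσ hξint hξmean hξmgf β βstar g hg v D hvD lam hlam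
  rcases eq_or_ne lam 0 with rfl | hne
  · simp only [zero_mul, Real.exp_zero, integral_const, probReal_univ, ENNReal.toReal_one,
      one_smul, ne_eq, OfNat.ofNat_ne_zero, not_false_eq_true, zero_pow, mul_zero]
    exact le_rfl
  set Δ : EuclideanSpace ℝ (Fin d) := β - βstar with hΔ_def
  set s : ℝ := Real.sqrt (‖Δ‖ ^ 2 + σ ^ 2) with hs_def
  have hs0 : 0 ≤ s := Real.sqrt_nonneg _
  have hs2 : s ^ 2 = ‖Δ‖ ^ 2 + σ ^ 2 := Real.sq_sqrt (by positivity)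
  have hD0 : 0 ≤ D := (norm_nonneg v).trans hvD
  -- positivity of the denominator
  have hlam_pos : 0 < |lam| := abs_pos.mpr hne
  have hden_pos : 0 < 8 * s * D := by
    by_contra hcon
    push_neg at hcon
    have : 1 / (8 * s * D) ≤ 0 := one_div_nonpos.mpr hcon
    linarith [hlam_pos.trans_le hlam]
  have hs : 0 < s := by nlinarith
  have hD : 0 < D := by nlinarith
  set lam0 : ℝ := 1 / (8 * s * D) with hlam0_def
  have hlam0 : 0 < lam0 := by positivity
  have hlam' : |lam| ≤ lam0 := hlam
  -- basic random variables
  set a : Ω → ℝ := fun ω => ⟪x ω, v⟫ with ha_def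
  set b : Ω → ℝ := fun ω => ⟪x ω, Δ⟫ - ξ ω with hb_def
  set Z : Ω → ℝ := fun ω => a ω * b ω with hZ_def
  have ham : Measurable a := hxm.inner measurable_const
  have hbm : Measurable b := (hxm.inner measurable_const).sub hξm
  have hZm : Measurable Z := ham.mul hbm
  have hgv : ∀ ω, ⟪g ω, v⟫ = Z ω := by
    intro ω
    have h1 : ⟪g ω, v⟫ = ∑ i, g ω i * v i := by
      simp [PiLp.inner_apply, RCLike.inner_apply, conj_trivial]
      exact Finset.sum_congr rfl fun i _ => mul_comm _ _
    have h2 : a ω = ∑ i, x ω i * v i := by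
      simp [ha_def, PiLp.inner_apply, RCLike.inner_apply, conj_trivial]
      exact Finset.sum_congr rfl fun i _ => mul_comm _ _
    have h3 : ⟪x ω, Δ⟫ = ⟪x ω, β⟫ - ⟪x ω, βstar⟫ := by
      rw [hΔ_def, inner_sub_right]
    rw [h1]
    have h4 : ∀ i, g ω i * v i =
        (⟪x ω, β⟫ - ⟪x ω, βstar⟫ - ξ ω) * (x ω i * v i) := by
      intro i; rw [hg ω i]; ring
    rw [Finset.sum_congr rfl fun i _ => h4 i, ← Finset.mul_sum]
    rw [hZ_def]
    simp only [hb_def, h3, ← h2]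
    ring
  simp only [hgv]
  -- sub-Gaussian MGF for all linear projections of x
  have hlin : ∀ (w : EuclideanSpace ℝ (Fin d)) (t : ℝ),
      Integrable (fun ω => Real.exp (t * ⟪x ω, w⟫)) ℙ ∧
        ∫ ω, Real.exp (t * ⟪x ω, w⟫) ∂ℙ ≤ Real.exp (t ^ 2 * ‖w‖ ^ 2 / 2) := by
    intro w t
    rcases eq_or_ne w 0 with rfl | hw
    · simp only [inner_zero_right, mul_zero, Real.exp_zero]
      refine ⟨integrable_const 1, ?_⟩
      rw [integral_const, probReal_univ]
      simp only [ENNReal.toReal_one, one_smul]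
      exact Real.one_le_exp (by positivity)
    · have hwn : (0:ℝ) < ‖w‖ := norm_pos_iff.mpr hw
      have hu : ‖(‖w‖⁻¹ • w : EuclideanSpace ℝ (Fin d))‖ = 1 := norm_smul_inv_norm hw
      have h1 := hx (‖w‖⁻¹ • w) hu (t * ‖w‖)
      have heq : (fun ω => Real.exp ((t * ‖w‖) * ⟪x ω, ‖w‖⁻¹ • w⟫))
          = fun ω => Real.exp (t * ⟪x ω, w⟫) := by
        funext ω
        congr 1
        rw [real_inner_smul_right]
        field_simp
      rw [heq] at h1
      refine ⟨h1.1, h1.2.trans ?_⟩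
      apply Real.exp_le_exp.mpr
      apply le_of_eq
      field_simp
  -- MGF bounds for a and b
  have ha_mgf : ∀ t : ℝ, Integrable (fun ω => Real.exp (t * a ω)) ℙ ∧
      ∫ ω, Real.exp (t * a ω) ∂ℙ ≤ Real.exp (t ^ 2 * D ^ 2 / 2) := by
    intro t
    refine ⟨(hlin v t).1, (hlin v t).2.trans ?_⟩
    apply Real.exp_le_exp.mpr
    have : ‖v‖ ^ 2 ≤ D ^ 2 := pow_le_pow_left₀ (norm_nonneg v) hvD 2
    nlinarith [sq_nonneg t]
  have hb_mgf : ∀ t : ℝ, Integrable (fun ω => Real.exp (t * b ω)) ℙ ∧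
      ∫ ω, Real.exp (t * b ω) ∂ℙ ≤ Real.exp (t ^ 2 * s ^ 2 / 2) := by
    intro t
    have hφm : Measurable fun y : EuclideanSpace ℝ (Fin d) => Real.exp (t * ⟪y, Δ⟫) :=
      Real.measurable_exp.comp (measurable_const.mul (measurable_id.inner measurable_const))
    have hψm : Measurable fun r : ℝ => Real.exp (-t * r) :=
      Real.measurable_exp.comp (measurable_const.mul measurable_id)
    have hind : IndepFun (fun ω => Real.exp (t * ⟪x ω, Δ⟫))
        (fun ω => Real.exp (-t * ξ ω)) ℙ := hIndep.comp hφm hψm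
    have hint1 := (hlin Δ t).1
    have hint2 := (hξmgf (-t)).1
    have hprod : (fun ω => Real.exp (t * b ω))
        = (fun ω => Real.exp (t * ⟪x ω, Δ⟫)) * fun ω => Real.exp (-t * ξ ω) := by
      funext ω
      simp only [Pi.mul_apply, ← Real.exp_add, hb_def]
      congr 1
      ring
    constructor
    · rw [hprod]; exact hind.integrable_mul hint1 hint2
    · rw [hprod, hind.integral_mul_eq_mul_integral hint1.1 hint2.1]
      have e1 := (hlin Δ t).2
      have e2 := (hξmgf (-t)).2
      have p1 : 0 ≤ ∫ ω, Real.exp (t * ⟪x ω, Δ⟫) ∂ℙ :=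
        integral_nonneg fun ω => (Real.exp_pos _).le
      calc (∫ ω, Real.exp (t * ⟪x ω, Δ⟫) ∂ℙ) * ∫ ω, Real.exp (-t * ξ ω) ∂ℙ
          ≤ Real.exp (t ^ 2 * ‖Δ‖ ^ 2 / 2) * Real.exp ((-t) ^ 2 * σ ^ 2 / 2) := by
            apply mul_le_mul e1 e2 (integral_nonneg fun ω => (Real.exp_pos _).le)
              (Real.exp_pos _).le
        _ = Real.exp (t ^ 2 * s ^ 2 / 2) := by
            rw [← Real.exp_add]; congr 1; rw [hs2]; ring
  -- exp-square moments
  have ht1 : (0:ℝ) < 1 / (8 * D ^ 2) := by positivity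
  have ht2 : (0:ℝ) < 1 / (8 * s ^ 2) := by positivity
  have hc1 : 1 / (8 * D ^ 2) * D ^ 2 ≤ 1 / 8 := by
    rw [div_mul_eq_mul_div, one_mul]
    rw [div_le_div_iff₀ (by positivity) (by norm_num)]
    ring_nf
    nlinarith [sq_nonneg D]
  have hc2 : 1 / (8 * s ^ 2) * s ^ 2 ≤ 1 / 8 := by
    rw [div_mul_eq_mul_div, one_mul]
    rw [div_le_div_iff₀ (by positivity) (by norm_num)]
    ring_nf
    nlinarith [sq_nonneg s]
  have EA := my_exp_sq a ham D hD ha_mgf (1 / (8 * D ^ 2)) ht1.le hc1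
  have EB := my_exp_sq b hbm s hs hb_mgf (1 / (8 * s ^ 2)) ht2.le hc2
  -- Young + Cauchy-Schwarz: lintegral bound for exp(lam0 |Z|)
  have hyoung : ∀ ω, lam0 * |Z ω| ≤
      (1 / (8 * D ^ 2)) * a ω ^ 2 / 2 + (1 / (8 * s ^ 2)) * b ω ^ 2 / 2 := by
    intro ω
    have habs : |Z ω| = |a ω| * |b ω| := abs_mul _ _
    have hkey : 2 * s * D * (|a ω| * |b ω|) ≤ s ^ 2 * |a ω| ^ 2 + D ^ 2 * |b ω| ^ 2 := by
      nlinarith [sq_nonneg (s * |a ω| - D * |b ω|)]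
    rw [habs, hlam0_def]
    rw [← sq_abs (a ω), ← sq_abs (b ω)]
    exact my_young_aux s D (|a ω|) (|b ω|) hs hD hkey
  -- Cauchy–Schwarz to bound the MGF of lam0 * |Z|
  set f1 : Ω → ℝ≥0∞ := fun ω => ENNReal.ofReal (Real.exp (1 / (8 * D ^ 2) * a ω ^ 2 / 2)) with hf1
  set f2 : Ω → ℝ≥0∞ := fun ω => ENNReal.ofReal (Real.exp (1 / (8 * s ^ 2) * b ω ^ 2 / 2)) with hf2
  have h22 : Real.HolderConjugate 2 2 := Real.HolderConjugate.two_two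
  have hf1m : AEMeasurable f1 ℙ :=
    ((Real.measurable_exp.comp ((measurable_const.mul (ham.pow_const 2)).div_const 2)).ennreal_ofReal).aemeasurable
  have hf2m : AEMeasurable f2 ℙ :=
    ((Real.measurable_exp.comp ((measurable_const.mul (hbm.pow_const 2)).div_const 2)).ennreal_ofReal).aemeasurable
  have hCS := ENNReal.lintegral_mul_le_Lp_mul_Lq ℙ h22 hf1m hf2m
  have hsq1 : ∀ ω, f1 ω ^ (2:ℝ) = ENNReal.ofReal (Real.exp (1 / (8 * D ^ 2) * a ω ^ 2)) := by
    intro ω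
    rw [hf1]
    rw [ENNReal.ofReal_rpow_of_nonneg (Real.exp_nonneg _) (by norm_num)]
    congr 1
    have h2n : ((2:ℝ)) = ((2:ℕ):ℝ) := by norm_num
    rw [h2n, Real.rpow_natCast, sq, ← Real.exp_add]
    congr 1
    ring
  have hsq2 : ∀ ω, f2 ω ^ (2:ℝ) = ENNReal.ofReal (Real.exp (1 / (8 * s ^ 2) * b ω ^ 2)) := by
    intro ω
    rw [hf2]
    rw [ENNReal.ofReal_rpow_of_nonneg (Real.exp_nonneg _) (by norm_num)]
    congr 1
    have h2n : ((2:ℝ)) = ((2:ℕ):ℝ) := by norm_num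
    rw [h2n, Real.rpow_natCast, sq, ← Real.exp_add]
    congr 1
    ring
  have hCS' : ∫⁻ ω, (f1 * f2) ω ∂ℙ ≤ ENNReal.ofReal 14 := by
    refine hCS.trans ?_
    have e1 : ∫⁻ ω, f1 ω ^ (2:ℝ) ∂ℙ ≤ ENNReal.ofReal 14 := by
      simp only [hsq1]; exact EA
    have e2 : ∫⁻ ω, f2 ω ^ (2:ℝ) ∂ℙ ≤ ENNReal.ofReal 14 := by
      simp only [hsq2]; exact EB
    calc (∫⁻ ω, f1 ω ^ (2:ℝ) ∂ℙ) ^ (1/(2:ℝ)) * (∫⁻ ω, f2 ω ^ (2:ℝ) ∂ℙ) ^ (1/(2:ℝ))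
        ≤ (ENNReal.ofReal 14) ^ (1/(2:ℝ)) * (ENNReal.ofReal 14) ^ (1/(2:ℝ)) := by
          exact mul_le_mul' (ENNReal.rpow_le_rpow e1 (by norm_num))
            (ENNReal.rpow_le_rpow e2 (by norm_num))
      _ = ENNReal.ofReal 14 := by
          rw [← ENNReal.rpow_add _ _ (by simp : (ENNReal.ofReal 14) ≠ 0) ENNReal.ofReal_ne_top]
          norm_num
  have hL : ∫⁻ ω, ENNReal.ofReal (Real.exp (lam0 * |Z ω|)) ∂ℙ ≤ ENNReal.ofReal 14 := by
    refine le_trans (lintegral_mono fun ω => ?_) hCS'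
    show ENNReal.ofReal (Real.exp (lam0 * |Z ω|)) ≤ (f1 * f2) ω
    rw [Pi.mul_apply, hf1, hf2, ← ENNReal.ofReal_mul (Real.exp_nonneg _), ← Real.exp_add]
    exact ENNReal.ofReal_le_ofReal (Real.exp_le_exp.mpr (hyoung ω))
  -- integrability of exp (lam0 |Z|) and the real bound
  have hexpZ_meas : Measurable fun ω => Real.exp (lam0 * |Z ω|) :=
    Real.measurable_exp.comp (measurable_const.mul hZm.abs)
  have hexpZ_int : Integrable (fun ω => Real.exp (lam0 * |Z ω|)) ℙ := by
    refine ⟨hexpZ_meas.aestronglyMeasurable, ?_⟩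
    rw [hasFiniteIntegral_iff_ofReal (ae_of_all _ fun ω => (Real.exp_pos _).le)]
    exact lt_of_le_of_lt hL ENNReal.ofReal_lt_top
  have hEexp : ∫ ω, Real.exp (lam0 * |Z ω|) ∂ℙ ≤ 14 := by
    rw [integral_eq_lintegral_of_nonneg_ae (ae_of_all _ fun ω => (Real.exp_pos _).le)
      hexpZ_meas.aestronglyMeasurable]
    calc (∫⁻ ω, ENNReal.ofReal (Real.exp (lam0 * |Z ω|)) ∂ℙ).toReal
        ≤ (ENNReal.ofReal 14).toReal := ENNReal.toReal_mono ENNReal.ofReal_ne_top hL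
      _ = 14 := by rw [ENNReal.toReal_ofReal]; norm_num
  -- Z is integrable, with mean bound
  have hptZ : ∀ ω, ‖Z ω‖ ≤ lam0⁻¹ * Real.exp (lam0 * |Z ω|) := by
    intro ω
    rw [Real.norm_eq_abs]
    rw [← mul_le_mul_iff_right₀ hlam0, ← mul_assoc, mul_inv_cancel₀ hlam0.ne', one_mul]
    linarith [Real.add_one_le_exp (lam0 * |Z ω|), Real.exp_pos (lam0 * |Z ω|)]
  have hZint : Integrable Z ℙ := by
    refine Integrable.mono' (hexpZ_int.const_mul lam0⁻¹) hZm.aestronglyMeasurable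
      (ae_of_all _ hptZ)
  set muZ : ℝ := ∫ ω, Z ω ∂ℙ with hmuZ_def
  have hmuZ_bound : lam0 * |muZ| ≤ 14 := by
    have h1 : |muZ| ≤ ∫ ω, |Z ω| ∂ℙ := by
      rw [hmuZ_def]
      simpa [Real.norm_eq_abs] using norm_integral_le_integral_norm (μ := ℙ) Z
    have h2 : ∫ ω, |Z ω| ∂ℙ ≤ ∫ ω, lam0⁻¹ * Real.exp (lam0 * |Z ω|) ∂ℙ := by
      refine integral_mono hZint.abs (hexpZ_int.const_mul lam0⁻¹) fun ω => ?_
      have := hptZ ω; rwa [Real.norm_eq_abs] at this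
    rw [integral_const_mul] at h2
    have h3 : |muZ| ≤ lam0⁻¹ * 14 := by
      refine h1.trans (h2.trans ?_)
      exact mul_le_mul_of_nonneg_left hEexp (inv_nonneg.mpr hlam0.le)
    calc lam0 * |muZ| ≤ lam0 * (lam0⁻¹ * 14) :=
          mul_le_mul_of_nonneg_left h3 hlam0.le
      _ = 14 := by field_simp
  -- the centered variable W
  set W : Ω → ℝ := fun ω => Z ω - muZ with hW_def
  have hWm : Measurable W := hZm.sub measurable_const
  have hWint : Integrable W ℙ := hZint.sub (integrable_const muZ)
  have hW0 : ∫ ω, W ω ∂ℙ = 0 := by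
    rw [hW_def]
    rw [integral_sub hZint (integrable_const muZ), integral_const, probReal_univ]
    simp [hmuZ_def]
  have hptW : ∀ ω, Real.exp (lam0 * |W ω|) ≤ Real.exp 14 * Real.exp (lam0 * |Z ω|) := by
    intro ω
    rw [← Real.exp_add]
    apply Real.exp_le_exp.mpr
    have habs : |W ω| ≤ |Z ω| + |muZ| := by
      rw [hW_def]; exact abs_sub (Z ω) muZ
    nlinarith [hlam0.le, abs_nonneg (Z ω), abs_nonneg muZ, hmuZ_bound]
  have hexpW_int : Integrable (fun ω => Real.exp (lam0 * |W ω|)) ℙ := by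
    refine Integrable.mono' ((hexpZ_int.const_mul (Real.exp 14))) 
      (Real.measurable_exp.comp (measurable_const.mul hWm.abs)).aestronglyMeasurable
      (ae_of_all _ fun ω => ?_)
    rw [Real.norm_eq_abs, abs_of_pos (Real.exp_pos _)]
    exact hptW ω
  have hEexpW : ∫ ω, Real.exp (lam0 * |W ω|) ∂ℙ ≤ 14 * Real.exp 14 := by
    calc ∫ ω, Real.exp (lam0 * |W ω|) ∂ℙ
        ≤ ∫ ω, Real.exp 14 * Real.exp (lam0 * |Z ω|) ∂ℙ :=
          integral_mono hexpW_int (hexpZ_int.const_mul _) hptW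
      _ = Real.exp 14 * ∫ ω, Real.exp (lam0 * |Z ω|) ∂ℙ := integral_const_mul _ _
      _ ≤ Real.exp 14 * 14 := mul_le_mul_of_nonneg_left hEexp (Real.exp_nonneg _)
      _ = 14 * Real.exp 14 := by ring
  -- the goal integrand is exp (lam * W)
  have hgoal_eq : ∀ ω, Real.exp (lam * (Z ω - muZ)) = Real.exp (lam * W ω) := by
    intro ω; rw [hW_def]
  -- integrability of exp (lam * W)
  have hptlamW : ∀ ω, Real.exp (lam * W ω) ≤ Real.exp (lam0 * |W ω|) := by
    intro ω
    apply Real.exp_le_exp.mpr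
    calc lam * W ω ≤ |lam * W ω| := le_abs_self _
      _ = |lam| * |W ω| := abs_mul _ _
      _ ≤ lam0 * |W ω| := mul_le_mul_of_nonneg_right hlam' (abs_nonneg _)
  have hexplamW_int : Integrable (fun ω => Real.exp (lam * W ω)) ℙ := by
    refine Integrable.mono' hexpW_int
      (Real.measurable_exp.comp (measurable_const.mul hWm)).aestronglyMeasurable
      (ae_of_all _ fun ω => ?_)
    rw [Real.norm_eq_abs, abs_of_pos (Real.exp_pos _)]
    exact hptlamW ω
  -- identify the right-hand side exponent
  have hinv : lam0 ^ 2 * (64 * s ^ 2 * D ^ 2) = 1 := by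
    rw [hlam0_def]; field_simp; ring
  have hRHS : 112 * Real.exp 14 * lam ^ 2 * ((8:ℝ) ^ 2 * (‖Δ‖ ^ 2 + σ ^ 2)) * D ^ 2
      = lam ^ 2 * (112 * Real.exp 14 * (64 * s ^ 2 * D ^ 2)) := by
    rw [← hs2]; ring
  simp only [hgoal_eq]
  rcases le_or_gt (|lam|) (lam0 / 2) with hcase | hcase
  · -- small lam: Taylor expansion argument
    have hptT : ∀ ω, W ω ^ 2 * Real.exp |lam * W ω| ≤
        (8 / lam0 ^ 2) * Real.exp (lam0 * |W ω|) := by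
      intro ω
      have h1 : (lam0 / 2 * |W ω|) ^ 2 ≤ 2 * Real.exp (lam0 / 2 * |W ω|) :=
        my_sq_le_exp (by positivity)
      have h2 : W ω ^ 2 ≤ (8 / lam0 ^ 2) * Real.exp (lam0 / 2 * |W ω|) := by
        rw [← sq_abs (W ω)]
        have h3 : (lam0 / 2) ^ 2 * |W ω| ^ 2 ≤ 2 * Real.exp (lam0 / 2 * |W ω|) := by
          calc (lam0 / 2) ^ 2 * |W ω| ^ 2 = (lam0 / 2 * |W ω|) ^ 2 := by ring
            _ ≤ 2 * Real.exp (lam0 / 2 * |W ω|) := h1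
        calc |W ω| ^ 2 = ((lam0 / 2) ^ 2 * |W ω| ^ 2) / (lam0 / 2) ^ 2 := by
              field_simp
          _ ≤ (2 * Real.exp (lam0 / 2 * |W ω|)) / (lam0 / 2) ^ 2 := by
              exact (div_le_div_iff_of_pos_right (by positivity)).mpr h3
          _ = (8 / lam0 ^ 2) * Real.exp (lam0 / 2 * |W ω|) := by
              field_simp; ring
      have h4 : Real.exp |lam * W ω| ≤ Real.exp (lam0 / 2 * |W ω|) := by
        apply Real.exp_le_exp.mpr
        rw [abs_mul]
        exact mul_le_mul_of_nonneg_right hcase (abs_nonneg _)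
      calc W ω ^ 2 * Real.exp |lam * W ω|
          ≤ ((8 / lam0 ^ 2) * Real.exp (lam0 / 2 * |W ω|)) * Real.exp (lam0 / 2 * |W ω|) := by
            apply mul_le_mul h2 h4 (Real.exp_nonneg _)
            positivity
        _ = (8 / lam0 ^ 2) * Real.exp (lam0 * |W ω|) := by
            rw [mul_assoc, ← Real.exp_add]
            congr 2
            ring
    have hTm : Measurable fun ω => W ω ^ 2 * Real.exp |lam * W ω| :=
      (hWm.pow_const 2).mul (Real.measurable_exp.comp (measurable_const.mul hWm).abs)
    have hT_int : Integrable (fun ω => W ω ^ 2 * Real.exp |lam * W ω|) ℙ := by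
      refine Integrable.mono' (hexpW_int.const_mul (8 / lam0 ^ 2))
        hTm.aestronglyMeasurable (ae_of_all _ fun ω => ?_)
      rw [Real.norm_eq_abs, abs_of_nonneg (by positivity)]
      exact hptT ω
    have hT_bound : ∫ ω, W ω ^ 2 * Real.exp |lam * W ω| ∂ℙ ≤ (8 / lam0 ^ 2) * (14 * Real.exp 14) := by
      calc ∫ ω, W ω ^ 2 * Real.exp |lam * W ω| ∂ℙ
          ≤ ∫ ω, (8 / lam0 ^ 2) * Real.exp (lam0 * |W ω|) ∂ℙ :=
            integral_mono hT_int (hexpW_int.const_mul _) hptT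
        _ = (8 / lam0 ^ 2) * ∫ ω, Real.exp (lam0 * |W ω|) ∂ℙ := integral_const_mul _ _
        _ ≤ (8 / lam0 ^ 2) * (14 * Real.exp 14) :=
            mul_le_mul_of_nonneg_left hEexpW (by positivity)
    have hmain : ∫ ω, Real.exp (lam * W ω) ∂ℙ ≤
        1 + lam ^ 2 * ((8 / lam0 ^ 2) * (14 * Real.exp 14)) := by
      have hRHSint : Integrable (fun ω => 1 + lam * W ω + lam ^ 2 * (W ω ^ 2 * Real.exp |lam * W ω|)) ℙ :=
        ((integrable_const 1).add (hWint.const_mul lam)).add (hT_int.const_mul (lam ^ 2))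
      calc ∫ ω, Real.exp (lam * W ω) ∂ℙ
          ≤ ∫ ω, (1 + lam * W ω + lam ^ 2 * (W ω ^ 2 * Real.exp |lam * W ω|)) ∂ℙ := by
            refine integral_mono hexplamW_int hRHSint fun ω => ?_
            have := my_exp_taylor (lam * W ω)
            calc Real.exp (lam * W ω) ≤ 1 + lam * W ω + (lam * W ω) ^ 2 * Real.exp |lam * W ω| := this
              _ = 1 + lam * W ω + lam ^ 2 * (W ω ^ 2 * Real.exp |lam * W ω|) := by ring
        _ = 1 + lam * (∫ ω, W ω ∂ℙ) + lam ^ 2 * ∫ ω, W ω ^ 2 * Real.exp |lam * W ω| ∂ℙ := by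
            have hint1 : Integrable (fun ω => 1 + lam * W ω) ℙ := by
              simpa using (integrable_const (1:ℝ)).add (hWint.const_mul lam)
            rw [integral_add hint1 (hT_int.const_mul (lam ^ 2)),
              integral_add (integrable_const 1) (hWint.const_mul lam),
              integral_const, probReal_univ, integral_const_mul, integral_const_mul]
            simp
        _ = 1 + lam ^ 2 * ∫ ω, W ω ^ 2 * Real.exp |lam * W ω| ∂ℙ := by
            rw [hW0]; ring
        _ ≤ 1 + lam ^ 2 * ((8 / lam0 ^ 2) * (14 * Real.exp 14)) := by
            have := mul_le_mul_of_nonneg_left hT_bound (sq_nonneg lam)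
            linarith
    refine hmain.trans ?_
    rw [hRHS]
    have hy : lam ^ 2 * ((8 / lam0 ^ 2) * (14 * Real.exp 14))
        = lam ^ 2 * (112 * Real.exp 14 * (64 * s ^ 2 * D ^ 2)) := by
      have h64 : (8:ℝ) / lam0 ^ 2 = 8 * (64 * s ^ 2 * D ^ 2) := by
        rw [hlam0_def]
        field_simp
        ring
      rw [h64]; ring
    rw [← hy]
    linarith [Real.add_one_le_exp (lam ^ 2 * ((8 / lam0 ^ 2) * (14 * Real.exp 14)))]
  · -- large lam: crude bound
    have hmain : ∫ ω, Real.exp (lam * W ω) ∂ℙ ≤ 14 * Real.exp 14 :=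
      (integral_mono hexplamW_int hexpW_int hptlamW).trans hEexpW
    refine hmain.trans ?_
    rw [hRHS]
    have hexp_ge : lam ^ 2 * (112 * Real.exp 14 * (64 * s ^ 2 * D ^ 2)) ≥ 28 * Real.exp 14 := by
      have h1 : lam ^ 2 ≥ lam0 ^ 2 / 4 := by
        have := sq_le_sq' (by linarith [abs_nonneg lam] : -(|lam|) ≤ lam0/2) (le_of_lt hcase)
        nlinarith [sq_abs lam, hcase, hlam0]
      have hstep : lam0 ^ 2 / 4 * (112 * Real.exp 14 * (64 * s ^ 2 * D ^ 2))
          ≤ lam ^ 2 * (112 * Real.exp 14 * (64 * s ^ 2 * D ^ 2)) :=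
        mul_le_mul_of_nonneg_right h1 (by positivity)
      have heq : lam0 ^ 2 / 4 * (112 * Real.exp 14 * (64 * s ^ 2 * D ^ 2))
          = 28 * Real.exp 14 * (lam0 ^ 2 * (64 * s ^ 2 * D ^ 2)) := by ring
      rw [heq, hinv, mul_one] at hstep
      linarith
    have h14 : (14:ℝ) * Real.exp 14 ≤ Real.exp 18 := by
      have h2 : (14:ℝ) ≤ Real.exp 4 := by
        have h3 : ((2:ℝ)) ^ 4 ≤ Real.exp 1 ^ 4 := by
          apply pow_le_pow_left₀ (by norm_num)
          linarith [Real.exp_one_gt_d9]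
        have h4 : Real.exp 1 ^ 4 = Real.exp 4 := by
          rw [← Real.exp_nat_mul]; norm_num
        nlinarith
      calc (14:ℝ) * Real.exp 14 ≤ Real.exp 4 * Real.exp 14 :=
            mul_le_mul_of_nonneg_right h2 (Real.exp_nonneg _)
        _ = Real.exp 18 := by rw [← Real.exp_add]; norm_num
    refine h14.trans (Real.exp_le_exp.mpr ?_)
    linarith [hexp_ge, Real.one_le_exp (by norm_num : (0:ℝ) ≤ 14)]
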